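/- arXiv:2010.10644 — 3 statements merged into one kernel-verified Lean document; each statement's English description precedes it below -/
import Mathlib

section
/- For a finite state space S with nonempty compact uncertainty sets P(s) ⊆ the probability simplex on S, the robust value function V(s) = inf_{p ∈ P(s)} [r(s) + γ ∑_{s'} p(s') V(s')] exists as the unique fixed point of the robust Bellman operator, and the infimum is attained: for each s there exists p* ∈ P(s) with V(s) = r(s) + γ ∑_{s'} p*(s') V(s'). -/
/-- For compact uncertainty sets, the robust value function exists as
the unique fixed point of the robust Bellman operator, with the infimum attained. -/
theorem robust_value_exists_inf_attained {S : Type*} [Fintype S] [Nonempty S]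
    (r : S → ℝ) (γ : ℝ) (hγ0 : 0 ≤ γ) (hγ1 : γ < 1)
    (P : S → Set (S → ℝ)) (hPne : ∀ s, (P s).Nonempty)
    (hPcompact : ∀ s, IsCompact (P s))
    (hprob : ∀ s, ∀ p ∈ P s, (∀ s', 0 ≤ p s') ∧ ∑ s', p s' = 1) :
    ∃! V : S → ℝ,
      (∀ s, V s = r s + γ * sInf {x | ∃ p ∈ P s, x = ∑ s', p s' * V s'}) ∧
      (∀ s, ∃ p ∈ P s, V s = r s + γ * ∑ s', p s' * V s') := by
  classical
  set T : (S → ℝ) → (S → ℝ) :=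
    fun V s => r s + γ * sInf ((fun p => ∑ s', p s' * V s') '' P s) with hT
  have hset : ∀ (V : S → ℝ) (s : S),
      {x | ∃ p ∈ P s, x = ∑ s', p s' * V s'} = (fun p => ∑ s', p s' * V s') '' P s := by
    intro V s; ext x
    simp [Set.mem_image, eq_comm]
  have hcomp : ∀ (V : S → ℝ) (s : S),
      IsCompact ((fun p => ∑ s', p s' * V s') '' P s) :=
    fun V s => (hPcompact s).image (by continuity)
  have hne : ∀ (V : S → ℝ) (s : S),
      ((fun p => ∑ s', p s' * V s') '' P s).Nonempty :=
    fun V s => (hPne s).image _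
  -- attainment of the infimum
  have key : ∀ (V : S → ℝ) (s : S), ∃ p ∈ P s,
      (∑ s', p s' * V s') = sInf ((fun p => ∑ s', p s' * V s') '' P s) := by
    intro V s
    have := (hcomp V s).sInf_mem (hne V s)
    obtain ⟨p, hp, hpf⟩ := this
    exact ⟨p, hp, hpf⟩
  have hle : ∀ (V : S → ℝ) (s : S) (q : S → ℝ), q ∈ P s →
      sInf ((fun p => ∑ s', p s' * V s') '' P s) ≤ ∑ s', q s' * V s' := by
    intro V s q hq
    exact csInf_le (hcomp V s).bddBelow ⟨q, hq, rfl⟩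
  -- one-sided estimate
  have hdiff : ∀ (V W : S → ℝ) (s : S),
      sInf ((fun p => ∑ s', p s' * V s') '' P s)
        - sInf ((fun p => ∑ s', p s' * W s') '' P s) ≤ dist V W := by
    intro V W s
    obtain ⟨q, hq, hqf⟩ := key W s
    have h1 : sInf ((fun p => ∑ s', p s' * V s') '' P s) ≤ ∑ s', q s' * V s' :=
      hle V s q hq
    have h2 : (∑ s', q s' * V s') - (∑ s', q s' * W s') ≤ dist V W := by
      rw [← Finset.sum_sub_distrib]
      calc (∑ s', (q s' * V s' - q s' * W s'))
          ≤ ∑ s', q s' * dist V W := by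
            apply Finset.sum_le_sum
            intro i _
            rw [← mul_sub]
            have hqnn := (hprob s q hq).1 i
            have : V i - W i ≤ dist V W := by
              have h := dist_le_pi_dist V W i
              have := le_abs_self (V i - W i)
              calc V i - W i ≤ |V i - W i| := le_abs_self _
                _ = dist (V i) (W i) := (Real.dist_eq _ _).symm
                _ ≤ dist V W := dist_le_pi_dist V W i
            exact mul_le_mul_of_nonneg_left this hqnn
        _ = dist V W := by
            rw [← Finset.sum_mul, (hprob s q hq).2, one_mul]
    linarith [hqf]
  have hdist : ∀ V W : S → ℝ, dist (T V) (T W) ≤ γ * dist V W := by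
    intro V W
    rw [dist_pi_le_iff (by positivity)]
    intro s
    have h1 := hdiff V W s
    have h2 := hdiff W V s
    rw [hT]
    simp only [Real.dist_eq]
    have : r s + γ * sInf ((fun p => ∑ s', p s' * V s') '' P s)
        - (r s + γ * sInf ((fun p => ∑ s', p s' * W s') '' P s))
        = γ * (sInf ((fun p => ∑ s', p s' * V s') '' P s)
            - sInf ((fun p => ∑ s', p s' * W s') '' P s)) := by ring
    rw [this, abs_mul, abs_of_nonneg hγ0]
    apply mul_le_mul_of_nonneg_left _ hγ0
    rw [abs_sub_le_iff]
    rw [dist_comm W V] at h2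
    exact ⟨h1, h2⟩
  have hK1 : (⟨γ, hγ0⟩ : NNReal) < 1 := by
    change ((⟨γ, hγ0⟩ : NNReal) : ℝ) < ((1 : NNReal) : ℝ); exact_mod_cast hγ1
  have hC : ContractingWith (⟨γ, hγ0⟩ : NNReal) T :=
    ⟨hK1, LipschitzWith.of_dist_le_mul fun V W => hdist V W⟩
  have : Nonempty (S → ℝ) := ⟨fun _ => 0⟩
  set V := hC.fixedPoint T with hV
  have hfix : T V = V := hC.fixedPoint_isFixedPt
  refine ⟨V, ⟨?_, ?_⟩, ?_⟩
  · intro s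
    rw [hset V s]
    conv_lhs => rw [← hfix]
  · intro s
    obtain ⟨p, hp, hpf⟩ := key V s
    refine ⟨p, hp, ?_⟩
    conv_lhs => rw [← hfix]
    rw [hT]
    simp [hpf]
  · intro W hW
    have hWfix : T W = W := by
      funext s
      rw [hT]
      have := (hW.1 s)
      rw [hset W s] at this
      exact this.symm
    exact hC.fixedPoint_unique hWfix
end

section
/- The robust value function is antitone in the uncertainty set: if P(s) ⊆ P'(s) for all s, then the fixed point V' of the robust (inf) Bellman operator with uncertainty sets P' satisfies V'(s) ≤ V(s) for all s, where V is the fixed point with uncertainty sets P. -/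
/-- The robust value function is antitone in the uncertainty set. -/
theorem robust_value_antitone_in_uncertainty {S : Type*} [Fintype S] [Nonempty S]
    (r : S → ℝ) (γ : ℝ) (hγ0 : 0 ≤ γ) (hγ1 : γ < 1)
    (P P' : S → Set (S → ℝ))
    (hPne : ∀ s, (P s).Nonempty) (hP'ne : ∀ s, (P' s).Nonempty)
    (hsub : ∀ s, P s ⊆ P' s)
    (hprob : ∀ s, ∀ p ∈ P' s, (∀ s', 0 ≤ p s') ∧ ∑ s', p s' = 1)
    (V V' : S → ℝ)
    (hV : ∀ s, V s = r s + γ * sInf {x | ∃ p ∈ P s, x = ∑ s', p s' * V s'})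
    (hV' : ∀ s, V' s = r s + γ * sInf {x | ∃ p ∈ P' s, x = ∑ s', p s' * V' s'}) :
    ∀ s, V' s ≤ V s := by
  classical
  have hne : (Finset.univ : Finset S).Nonempty := Finset.univ_nonempty
  set M := Finset.univ.sup' hne (fun s => V' s - V s) with hMdef
  have hle : ∀ s, V' s - V s ≤ M := fun s => Finset.le_sup' (fun s => V' s - V s) (Finset.mem_univ s)
  obtain ⟨s0, -, hs0⟩ := Finset.exists_mem_eq_sup' hne (fun s => V' s - V s)
  have key : M ≤ γ * M := by
    set A := {x | ∃ p ∈ P s0, x = ∑ s', p s' * V s'} with hA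
    set A' := {x | ∃ p ∈ P' s0, x = ∑ s', p s' * V' s'} with hA'
    set B := {x | ∃ p ∈ P s0, x = ∑ s', p s' * V' s'} with hB
    have hBsub : B ⊆ A' := by
      rintro x ⟨p, hp, rfl⟩; exact ⟨p, hsub s0 hp, rfl⟩
    have hBne : B.Nonempty := by
      obtain ⟨p, hp⟩ := hPne s0; exact ⟨_, p, hp, rfl⟩
    have hAne : A.Nonempty := by
      obtain ⟨p, hp⟩ := hPne s0; exact ⟨_, p, hp, rfl⟩
    set m := Finset.univ.inf' hne V' with hm
    have hA'bdd : BddBelow A' := by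
      refine ⟨m, ?_⟩
      rintro x ⟨p, hp, rfl⟩
      obtain ⟨hp0, hp1⟩ := hprob s0 p hp
      calc m = ∑ s', p s' * m := by rw [← Finset.sum_mul, hp1, one_mul]
        _ ≤ ∑ s', p s' * V' s' := Finset.sum_le_sum fun s' _ =>
            mul_le_mul_of_nonneg_left (Finset.inf'_le _ (Finset.mem_univ s')) (hp0 s')
    have h1 : sInf A' ≤ sInf B := csInf_le_csInf hA'bdd hBne hBsub
    have h2 : sInf B - M ≤ sInf A := by
      refine le_csInf hAne ?_
      rintro x ⟨p, hp, rfl⟩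
      obtain ⟨hp0, hp1⟩ := hprob s0 p (hsub s0 hp)
      have hBle : sInf B ≤ ∑ s', p s' * V' s' :=
        csInf_le (hA'bdd.mono hBsub) ⟨p, hp, rfl⟩
      have hsum : ∑ s', p s' * V' s' ≤ ∑ s', p s' * V s' + M := by
        have : ∑ s', p s' * V' s' ≤ ∑ s', p s' * (V s' + M) :=
          Finset.sum_le_sum fun s' _ =>
            mul_le_mul_of_nonneg_left (by linarith [hle s']) (hp0 s')
        calc ∑ s', p s' * V' s' ≤ ∑ s', p s' * (V s' + M) := this
          _ = ∑ s', p s' * V s' + (∑ s', p s') * M := by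
              rw [Finset.sum_mul]
              rw [← Finset.sum_add_distrib]
              exact Finset.sum_congr rfl fun s' _ => by ring
          _ = ∑ s', p s' * V s' + M := by rw [hp1, one_mul]
      linarith
    have heq : V' s0 - V s0 = γ * (sInf A' - sInf A) := by
      rw [hV s0, hV' s0]; ring
    have : sInf A' - sInf A ≤ M := by linarith
    calc M = V' s0 - V s0 := hs0
      _ = γ * (sInf A' - sInf A) := heq
      _ ≤ γ * M := mul_le_mul_of_nonneg_left this hγ0
  have hM0 : M ≤ 0 := by nlinarith
  intro s
  linarith [hle s]
end

section
/- Let T_inf and T_sup be the robust (inf) and worst-case (sup) Bellman operators with rewards r and costs c respectively, over the same uncertainty sets P(s), and let λ ≥ 0. Define the combined operator on pairs 𝐓(V, V_C) = (T_inf V, T_sup V_C) on the product space (S → ℝ) × (S → ℝ) endowed with the max-of-sup-norms metric. Then 𝐓 is a γ-contraction, and its unique fixed point (V*, V_C*) yields the unique R3C value 𝐕* = V* − λ V_C*. -/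
private lemma pmf_sum_abs_le {S : Type*} [Fintype S] (p U V : S → ℝ)
    (hp0 : ∀ s, 0 ≤ p s) (hp1 : ∑ s, p s = 1) (D : ℝ) (hD : ∀ s, |U s - V s| ≤ D) :
    |∑ s, p s * U s - ∑ s, p s * V s| ≤ D := by
  rw [← Finset.sum_sub_distrib]
  calc |∑ s, (p s * U s - p s * V s)|
      ≤ ∑ s, |p s * U s - p s * V s| := Finset.abs_sum_le_sum_abs _ _
    _ = ∑ s, p s * |U s - V s| := by
        refine Finset.sum_congr rfl fun s _ => ?_
        rw [← mul_sub, abs_mul, abs_of_nonneg (hp0 s)]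
    _ ≤ ∑ s, p s * D := Finset.sum_le_sum fun s _ =>
        mul_le_mul_of_nonneg_left (hD s) (hp0 s)
    _ = D := by rw [← Finset.sum_mul, hp1, one_mul]

private lemma abs_csInf_sub_csInf_le {A B : Set ℝ} (hA : A.Nonempty) (hB : B.Nonempty)
    (hAb : BddBelow A) (hBb : BddBelow B) {D : ℝ}
    (h1 : ∀ x ∈ A, ∃ y ∈ B, |x - y| ≤ D) (h2 : ∀ y ∈ B, ∃ x ∈ A, |x - y| ≤ D) :
    |sInf A - sInf B| ≤ D := by
  rw [abs_sub_le_iff]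
  constructor
  · have h : sInf A - D ≤ sInf B := by
      refine le_csInf hB fun y hy => ?_
      obtain ⟨x, hx, hxy⟩ := h2 y hy
      have h1' := (abs_sub_le_iff.mp hxy).1
      have := csInf_le hAb hx
      linarith
    linarith
  · have h : sInf B - D ≤ sInf A := by
      refine le_csInf hA fun x hx => ?_
      obtain ⟨y, hy, hxy⟩ := h1 x hx
      have h1' := (abs_sub_le_iff.mp hxy).2
      have := csInf_le hBb hy
      linarith
    linarith

private lemma abs_csSup_sub_csSup_le {A B : Set ℝ} (hA : A.Nonempty) (hB : B.Nonempty)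
    (hAb : BddAbove A) (hBb : BddAbove B) {D : ℝ}
    (h1 : ∀ x ∈ A, ∃ y ∈ B, |x - y| ≤ D) (h2 : ∀ y ∈ B, ∃ x ∈ A, |x - y| ≤ D) :
    |sSup A - sSup B| ≤ D := by
  rw [abs_sub_le_iff]
  constructor
  · have h : sSup A ≤ sSup B + D := by
      refine csSup_le hA fun x hx => ?_
      obtain ⟨y, hy, hxy⟩ := h1 x hx
      have h1' := (abs_sub_le_iff.mp hxy).1
      have := le_csSup hBb hy
      linarith
    linarith
  · have h : sSup B ≤ sSup A + D := by
      refine csSup_le hB fun y hy => ?_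
      obtain ⟨x, hx, hxy⟩ := h2 y hy
      have h1' := (abs_sub_le_iff.mp hxy).2
      have := le_csSup hAb hx
      linarith
    linarith

/-- The combined pair operator 𝐓(V, V_C) = (T_inf V, T_sup V_C) is a
γ-contraction for the max-of-sup-norms metric, and its unique fixed point yields
the unique R3C value V* − λ V_C*. -/
theorem combined_r3c_operator_contraction {S : Type*} [Fintype S] [Nonempty S]
    (r c : S → ℝ) (γ : ℝ) (hγ0 : 0 ≤ γ) (hγ1 : γ < 1) (lam : ℝ) (hlam : 0 ≤ lam)
    (P : S → Set (S → ℝ)) (hPne : ∀ s, (P s).Nonempty)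
    (hprob : ∀ s, ∀ p ∈ P s, (∀ s', 0 ≤ p s') ∧ ∑ s', p s' = 1)
    (Tinf Tsup : (S → ℝ) → (S → ℝ))
    (hTinf : ∀ V s, Tinf V s = r s + γ * sInf {x | ∃ p ∈ P s, x = ∑ s', p s' * V s'})
    (hTsup : ∀ V s, Tsup V s = c s + γ * sSup {x | ∃ p ∈ P s, x = ∑ s', p s' * V s'}) :
    (∀ U UC V VC : S → ℝ,
      max (⨆ s, |Tinf U s - Tinf V s|) (⨆ s, |Tsup UC s - Tsup VC s|) ≤
        γ * max (⨆ s, |U s - V s|) (⨆ s, |UC s - VC s|)) ∧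
    (∃! W : (S → ℝ) × (S → ℝ), Tinf W.1 = W.1 ∧ Tsup W.2 = W.2) ∧
    (∃! W : S → ℝ, ∃ V VC : S → ℝ,
      Tinf V = V ∧ Tsup VC = VC ∧ W = fun s => V s - lam * VC s) := by
  -- basic facts about the value sets
  set A : (S → ℝ) → S → Set ℝ := fun V s => {x | ∃ p ∈ P s, x = ∑ s', p s' * V s'} with hA
  have hAne : ∀ V s, (A V s).Nonempty := fun V s => by
    obtain ⟨p, hp⟩ := hPne s
    exact ⟨∑ s', p s' * V s', p, hp, rfl⟩
  have hbdd : ∀ V s, BddBelow (A V s) ∧ BddAbove (A V s) := by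
    intro V s
    obtain ⟨M, hM⟩ := Finite.exists_le fun s => |V s|
    have key : ∀ x ∈ A V s, |x| ≤ M := by
      rintro x ⟨p, hp, rfl⟩
      have h0 : (∑ s', p s' * (0 : ℝ)) = 0 := by simp
      have := pmf_sum_abs_le p V (fun _ => 0) (hprob s p hp).1 (hprob s p hp).2 M
        (fun s' => by simpa using hM s')
      simpa [h0] using this
    exact ⟨⟨-M, fun x hx => by have := (abs_le.mp (key x hx)).1; linarith⟩,
      ⟨M, fun x hx => (abs_le.mp (key x hx)).2⟩⟩
  have hpair : ∀ (U V : S → ℝ) (D : ℝ), (∀ s', |U s' - V s'| ≤ D) → ∀ s,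
      ∀ x ∈ A U s, ∃ y ∈ A V s, |x - y| ≤ D := by
    rintro U V D hD s x ⟨p, hp, rfl⟩
    exact ⟨∑ s', p s' * V s', ⟨p, hp, rfl⟩,
      pmf_sum_abs_le p U V (hprob s p hp).1 (hprob s p hp).2 D hD⟩
  -- per-state contraction bounds
  have hcontr_inf : ∀ (U V : S → ℝ) (D : ℝ), (∀ s', |U s' - V s'| ≤ D) →
      ∀ s, |Tinf U s - Tinf V s| ≤ γ * D := by
    intro U V D hD s
    have := abs_csInf_sub_csInf_le (hAne U s) (hAne V s) (hbdd U s).1 (hbdd V s).1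
      (hpair U V D hD s) (fun y hy => by
        obtain ⟨x, hx, hxy⟩ := hpair V U D (fun s' => by rw [abs_sub_comm]; exact hD s') s y hy
        exact ⟨x, hx, by rwa [abs_sub_comm]⟩)
    have heq : Tinf U s - Tinf V s = γ * (sInf (A U s) - sInf (A V s)) := by
      rw [hTinf, hTinf]; ring
    rw [heq, abs_mul, abs_of_nonneg hγ0]
    exact mul_le_mul_of_nonneg_left this hγ0
  have hcontr_sup : ∀ (U V : S → ℝ) (D : ℝ), (∀ s', |U s' - V s'| ≤ D) →
      ∀ s, |Tsup U s - Tsup V s| ≤ γ * D := by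
    intro U V D hD s
    have := abs_csSup_sub_csSup_le (hAne U s) (hAne V s) (hbdd U s).2 (hbdd V s).2
      (hpair U V D hD s) (fun y hy => by
        obtain ⟨x, hx, hxy⟩ := hpair V U D (fun s' => by rw [abs_sub_comm]; exact hD s') s y hy
        exact ⟨x, hx, by rwa [abs_sub_comm]⟩)
    have heq : Tsup U s - Tsup V s = γ * (sSup (A U s) - sSup (A V s)) := by
      rw [hTsup, hTsup]; ring
    rw [heq, abs_mul, abs_of_nonneg hγ0]
    exact mul_le_mul_of_nonneg_left this hγ0
  -- uniqueness of fixed points of each operator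
  have hcontr_dist_inf : ∀ U V : S → ℝ, dist (Tinf U) (Tinf V) ≤ γ * dist U V := by
    intro U V
    have h0 : 0 ≤ γ * dist U V := mul_nonneg hγ0 dist_nonneg
    rw [dist_pi_le_iff h0]
    intro s
    rw [Real.dist_eq]
    exact hcontr_inf U V (dist U V)
      (fun s' => by rw [← Real.dist_eq]; exact dist_le_pi_dist U V s') s
  have hcontr_dist_sup : ∀ U V : S → ℝ, dist (Tsup U) (Tsup V) ≤ γ * dist U V := by
    intro U V
    have h0 : 0 ≤ γ * dist U V := mul_nonneg hγ0 dist_nonneg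
    rw [dist_pi_le_iff h0]
    intro s
    rw [Real.dist_eq]
    exact hcontr_sup U V (dist U V)
      (fun s' => by rw [← Real.dist_eq]; exact dist_le_pi_dist U V s') s
  have huniq_inf : ∀ V V' : S → ℝ, Tinf V = V → Tinf V' = V' → V = V' := by
    intro V V' hV hV'
    have h := hcontr_dist_inf V V'
    rw [hV, hV'] at h
    have hd : dist V V' ≤ 0 := by nlinarith [dist_nonneg (x := V) (y := V')]
    exact dist_le_zero.mp hd
  have huniq_sup : ∀ V V' : S → ℝ, Tsup V = V → Tsup V' = V' → V = V' := by
    intro V V' hV hV'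
    have h := hcontr_dist_sup V V'
    rw [hV, hV'] at h
    have hd : dist V V' ≤ 0 := by nlinarith [dist_nonneg (x := V) (y := V')]
    exact dist_le_zero.mp hd
  -- existence of fixed points via Banach's fixed point theorem
  set K : NNReal := ⟨γ, hγ0⟩ with hK
  have hKlt : K < 1 := by
    rw [← NNReal.coe_lt_coe]
    exact hγ1
  have hcInf : ContractingWith K Tinf :=
    ⟨hKlt, LipschitzWith.of_dist_le_mul fun U V => hcontr_dist_inf U V⟩
  have hcSup : ContractingWith K Tsup :=
    ⟨hKlt, LipschitzWith.of_dist_le_mul fun U V => hcontr_dist_sup U V⟩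
  obtain ⟨Vi, hVi, -⟩ := hcInf.exists_fixedPoint (fun _ => 0) (edist_ne_top _ _)
  obtain ⟨Vs, hVs, -⟩ := hcSup.exists_fixedPoint (fun _ => 0) (edist_ne_top _ _)
  have hVi' : Tinf Vi = Vi := hVi
  have hVs' : Tsup Vs = Vs := hVs
  refine ⟨?_, ?_, ?_⟩
  · -- contraction in the max-of-sup-norms metric
    intro U UC V VC
    set D := max (⨆ s, |U s - V s|) (⨆ s, |UC s - VC s|) with hD
    have hb1 : BddAbove (Set.range fun s => |U s - V s|) :=
      (Set.finite_range _).bddAbove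
    have hb2 : BddAbove (Set.range fun s => |UC s - VC s|) :=
      (Set.finite_range _).bddAbove
    have hD1 : ∀ s', |U s' - V s'| ≤ D :=
      fun s' => (le_ciSup hb1 s').trans (le_max_left _ _)
    have hD2 : ∀ s', |UC s' - VC s'| ≤ D :=
      fun s' => (le_ciSup hb2 s').trans (le_max_right _ _)
    refine max_le (ciSup_le fun s => hcontr_inf U V D hD1 s)
      (ciSup_le fun s => hcontr_sup UC VC D hD2 s)
  · -- unique fixed point of the pair operator
    refine ⟨(Vi, Vs), ⟨hVi', hVs'⟩, ?_⟩
    rintro ⟨W1, W2⟩ ⟨h1, h2⟩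
    exact Prod.ext (huniq_inf W1 Vi h1 hVi') (huniq_sup W2 Vs h2 hVs')
  · -- unique R3C value
    refine ⟨fun s => Vi s - lam * Vs s, ⟨Vi, Vs, hVi', hVs', rfl⟩, ?_⟩
    rintro W ⟨V, VC, h1, h2, rfl⟩
    rw [huniq_inf V Vi h1 hVi', huniq_sup VC Vs h2 hVs']
end
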